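/- arXiv:1812.01450 — 3 statements merged into one kernel-verified Lean document; each statement's English description precedes it below -/
import Mathlib

section
/- Let $f_i, C, p, \phi, \epsilon^* $ be positive reals with $0 < \epsilon^* < 1$, $0 < \phi < 1$. Suppose $\tilde{f}, \tilde{C}, \hat{f}$ are positive reals with $\tilde{f} > \frac{f_i}{p}(1-\epsilon^*)$, $\tilde{C} < \frac{C}{p}(1+\epsilon^*)$, and $\hat{f} \geq \tilde{f}$. If $f_i > \phi C$, then $\hat{f} > \phi \tilde{C} \frac{1-\epsilon^*}{1+\epsilon^*}$. -/
theorem stmt_7 (fi C p φ εs ftilde Ctilde fhat : ℝ)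
    (hfi : 0 < fi) (hC : 0 < C) (hp : 0 < p)
    (hφ0 : 0 < φ) (hφ1 : φ < 1) (hε0 : 0 < εs) (hε1 : εs < 1)
    (hft : 0 < ftilde) (hCt : 0 < Ctilde) (hfh : 0 < fhat)
    (h1 : ftilde > (fi / p) * (1 - εs))
    (h2 : Ctilde < (C / p) * (1 + εs))
    (h3 : fhat ≥ ftilde)
    (h4 : fi > φ * C) :
    fhat > φ * Ctilde * ((1 - εs) / (1 + εs)) := by
  have hε : (0:ℝ) < 1 + εs := by linarith
  have key : φ * Ctilde * ((1 - εs) / (1 + εs)) < (fi / p) * (1 - εs) := by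
    have h2' : Ctilde * p < C * (1 + εs) := by
      rw [div_mul_eq_mul_div, lt_div_iff₀ hp] at h2; linarith
    have e : φ * Ctilde * ((1 - εs) / (1 + εs)) = (φ * Ctilde * (1 - εs)) / (1 + εs) := by
      ring
    have e2 : (fi / p) * (1 - εs) = (fi * (1 - εs)) / p := by ring
    rw [e, e2, div_lt_div_iff₀ hε hp]
    nlinarith [mul_lt_mul_of_pos_left h2' (mul_pos hφ0 (sub_pos.mpr hε1)),
      mul_lt_mul_of_pos_right h4 (mul_pos (sub_pos.mpr hε1) hε)]
  linarith
end

section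
/- Let $\phi, C, w, p, \epsilon^*, f_i$ be positive reals with $0 < \epsilon^* < 1$ and $w \geq 1$. Suppose $\hat{f}, \tilde{f}, \tilde{C}$ satisfy $\hat{f} \leq \tilde{f} + \frac{e\tilde{C}}{2w}$, $\tilde{f} < \frac{f_i}{p}(1+\epsilon^*)$, $\tilde{C} > \frac{C}{p}(1-\epsilon^*)$, and $\hat{f} > \phi\tilde{C}\frac{1-\epsilon^*}{1+\epsilon^*}$. Then $f_i > \left(\phi - \left[\frac{4\epsilon^*\phi}{(1+\epsilon^*)^2} + \frac{e}{2w}\cdot\frac{1-\epsilon^*}{1+\epsilon^*}\right]\right) C$. -/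
set_option maxHeartbeats 1000000


theorem stmt_8 (φ C w p εs fi fhat ftilde Ctilde : ℝ)
    (hφ : 0 < φ) (hC : 0 < C) (hw : 1 ≤ w) (hp : 0 < p) (hfi : 0 < fi)
    (hε0 : 0 < εs) (hε1 : εs < 1)
    (h1 : fhat ≤ ftilde + Real.exp 1 * Ctilde / (2 * w))
    (h2 : ftilde < (fi / p) * (1 + εs))
    (h3 : Ctilde > (C / p) * (1 - εs))
    (h4 : fhat > φ * Ctilde * ((1 - εs) / (1 + εs))) :
    fi > (φ - (4 * εs * φ / (1 + εs) ^ 2 +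
      Real.exp 1 / (2 * w) * ((1 - εs) / (1 + εs)))) * C := by
  have hw0 : (0 : ℝ) < w := lt_of_lt_of_le one_pos hw
  have he : (0 : ℝ) < Real.exp 1 := Real.exp_pos 1
  have h1p : (0 : ℝ) < 1 + εs := by linarith
  have h1m : (0 : ℝ) < 1 - εs := by linarith
  set E := Real.exp 1 with hE
  clear_value E
  have key : φ * Ctilde * ((1 - εs) / (1 + εs)) < ftilde + E * Ctilde / (2 * w) :=
    lt_of_lt_of_le h4 h1
  have h2w : (0 : ℝ) < 2 * w := by linarith
  have keym : φ * Ctilde * (1 - εs) * (2 * w) <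
      ftilde * (1 + εs) * (2 * w) + E * Ctilde * (1 + εs) := by
    have h := sub_pos.mpr key
    have hexp : ftilde * (1 + εs) * (2 * w) + E * Ctilde * (1 + εs)
        - φ * Ctilde * (1 - εs) * (2 * w)
        = (ftilde + E * Ctilde / (2 * w) - φ * Ctilde * ((1 - εs) / (1 + εs)))
          * ((1 + εs) * (2 * w)) := by
      field_simp
    nlinarith [mul_pos h (mul_pos h1p h2w)]
  have hfim : p * ftilde < fi * (1 + εs) := by
    have h := sub_pos.mpr h2
    have hexp : fi * (1 + εs) - p * ftilde = (fi / p * (1 + εs) - ftilde) * p := by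
      field_simp
    nlinarith [mul_pos h hp]
  have hCm : C * (1 - εs) < p * Ctilde := by
    have h := sub_pos.mpr h3
    have hexp : p * Ctilde - C * (1 - εs) = (Ctilde - C / p * (1 - εs)) * p := by
      field_simp
    nlinarith [mul_pos h hp]
  rcases le_or_gt (φ * (1 - εs) * (2 * w)) (E * (1 + εs)) with hB | hB
  · have hfac : φ - (4 * εs * φ / (1 + εs) ^ 2 + E / (2 * w) * ((1 - εs) / (1 + εs)))
        = (1 - εs) / ((1 + εs) ^ 2 * (2 * w)) * (φ * (1 - εs) * (2 * w) - E * (1 + εs)) := by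
      field_simp
      ring
    have : (φ - (4 * εs * φ / (1 + εs) ^ 2 + E / (2 * w) * ((1 - εs) / (1 + εs)))) * C ≤ 0 := by
      apply mul_nonpos_of_nonpos_of_nonneg _ hC.le
      rw [hfac]
      apply mul_nonpos_of_nonneg_of_nonpos
      · positivity
      · linarith
    linarith
  · have hCt : 0 < Ctilde := by nlinarith
    have step1 : C * (1 - εs) * (φ * (1 - εs) * (2 * w) - E * (1 + εs)) <
        p * Ctilde * (φ * (1 - εs) * (2 * w) - E * (1 + εs)) :=
      mul_lt_mul_of_pos_right hCm (by linarith)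
    have step2 : p * (φ * Ctilde * (1 - εs) * (2 * w)) <
        p * (ftilde * (1 + εs) * (2 * w) + E * Ctilde * (1 + εs)) :=
      mul_lt_mul_of_pos_left keym hp
    have step3 : p * ftilde * ((1 + εs) * (2 * w)) < fi * (1 + εs) * ((1 + εs) * (2 * w)) :=
      mul_lt_mul_of_pos_right hfim (by positivity)
    have comb : C * (1 - εs) * (φ * (1 - εs) * (2 * w) - E * (1 + εs)) <
        fi * (1 + εs) ^ 2 * (2 * w) := by nlinarith
    rw [gt_iff_lt, ← sub_pos]
    have hd : (0:ℝ) < (1 + εs) ^ 2 * (2 * w) := by positivity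
    have expand : fi - (φ - (4 * εs * φ / (1 + εs) ^ 2 + E / (2 * w) * ((1 - εs) / (1 + εs)))) * C
        = (fi * (1 + εs) ^ 2 * (2 * w)
            - C * (1 - εs) * (φ * (1 - εs) * (2 * w) - E * (1 + εs)))
          / ((1 + εs) ^ 2 * (2 * w)) := by
      field_simp
      ring
    rw [expand]
    exact div_pos (by linarith) hd
end

section
/- Let $f_i \geq 0$, $C > 0$, $p > 0$, $w > 0$, and $0 < \epsilon^* < 1$. Suppose positive reals $\tilde{p}, \tilde{f}, \tilde{C}, \hat{f}$ satisfy $\frac{p}{1+\epsilon^*} < \tilde{p} < \frac{p}{1-\epsilon^*}$, $\frac{f_i}{p}(1-\epsilon^*) < \tilde{f} < \frac{f_i}{p}(1+\epsilon^*)$, $\frac{C}{p}(1-\epsilon^*) < \tilde{C} < \frac{C}{p}(1+\epsilon^*)$, and $\tilde{f} \leq \hat{f} \leq \tilde{f} + \frac{e\tilde{C}}{2w}$. Then $\frac{1-\epsilon^*}{1+\epsilon^*} f_i < \hat{f}\,\tilde{p} < \frac{1+\epsilon^*}{1-\epsilon^*}\left(f_i + \frac{eC}{2w}\right)$. -/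
theorem stmt_13 (fi C p w εs ptilde ftilde Ctilde fhat : ℝ)
    (hfi : 0 ≤ fi) (hC : 0 < C) (hp : 0 < p) (hw : 0 < w)
    (hε0 : 0 < εs) (hε1 : εs < 1)
    (hpt : 0 < ptilde) (hft : 0 < ftilde) (hCt : 0 < Ctilde) (hfh : 0 < fhat)
    (h1 : p / (1 + εs) < ptilde) (h1' : ptilde < p / (1 - εs))
    (h2 : (fi / p) * (1 - εs) < ftilde) (h2' : ftilde < (fi / p) * (1 + εs))
    (h3 : (C / p) * (1 - εs) < Ctilde) (h3' : Ctilde < (C / p) * (1 + εs))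
    (h4 : ftilde ≤ fhat) (h4' : fhat ≤ ftilde + Real.exp 1 * Ctilde / (2 * w)) :
    (1 - εs) / (1 + εs) * fi < fhat * ptilde ∧
      fhat * ptilde < (1 + εs) / (1 - εs) * (fi + Real.exp 1 * C / (2 * w)) := by
  have hp1 : (0:ℝ) < 1 + εs := by linarith
  have hp2 : (0:ℝ) < 1 - εs := by linarith
  have he : (0:ℝ) < Real.exp 1 := Real.exp_pos 1
  rw [div_lt_iff₀ hp1] at h1
  rw [lt_div_iff₀ hp2] at h1'
  rw [div_mul_eq_mul_div, div_lt_iff₀ hp] at h2 h3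
  rw [div_mul_eq_mul_div, lt_div_iff₀ hp] at h2' h3'
  constructor
  · rw [div_mul_eq_mul_div, div_lt_iff₀ hp1]
    nlinarith [mul_pos hft hpt, mul_lt_mul_of_pos_left h1 hft,
      mul_lt_mul_of_pos_right h2 hpt, mul_le_mul_of_nonneg_right h4 hpt.le]
  · rw [div_mul_eq_mul_div, lt_div_iff₀ hp2]
    set E := Real.exp 1 with hE
    have h5 : E * Ctilde * p < (1 + εs) * (E * C) := by nlinarith
    have h6 : E * Ctilde * p / (2 * w) < (1 + εs) * (E * C) / (2 * w) := by
      rw [div_lt_div_iff₀ (by positivity) (by positivity)]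
      nlinarith
    have hfp : fhat * p < (1 + εs) * (fi + E * C / (2 * w)) := by
      have := mul_le_mul_of_nonneg_right h4' hp.le
      have hx : ftilde * p + E * Ctilde / (2 * w) * p < fi * (1 + εs) + (1 + εs) * (E * C) / (2 * w) := by
        have : E * Ctilde / (2 * w) * p = E * Ctilde * p / (2 * w) := by ring
        linarith [this ▸ h6, h2']
      have hexp : (1 + εs) * (fi + E * C / (2 * w)) = fi * (1 + εs) + (1 + εs) * (E * C) / (2 * w) := by ring
      linarith [hexp ▸ hx]
    have hmono : fhat * (ptilde * (1 - εs)) ≤ fhat * p :=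
      mul_le_mul_of_nonneg_left h1'.le hfh.le
    calc fhat * ptilde * (1 - εs) = fhat * (ptilde * (1 - εs)) := by ring
      _ ≤ fhat * p := hmono
      _ < (1 + εs) * (fi + E * C / (2 * w)) := hfp
end
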